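/- Let q be a unit quaternion with rotation angle θ (q = cos(θ/2) − sin(θ/2)·u, u a unit imaginary quaternion, θ ∈ [0, 2π]), and let t = α₁ i + α₂ j + α₃ k be any vector with |α₁|, |α₂|, |α₃| ≤ a. Then ‖q t q⁻¹ − t‖ ≤ 3 a θ. -/

import Mathlib

/-!
The real part `cos (θ / 2)` of `q` is central, so `q t - t q = sin (θ / 2) (t u - u t)`; as `q` is a
unit, `‖q t q⁻¹ - t‖ = ‖q t - t q‖ ≤ 2 |sin (θ / 2)| ‖t‖ ≤ θ ‖t‖`. The triangle inequality over
the unit vectors `i, j, k` gives `‖t‖ ≤ |α₁| + |α₂| + |α₃| ≤ 3 a`.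
-/

open Quaternion

theorem norm_mul_sub_mul_le {A : Type*} [NonUnitalSeminormedRing A] (a b : A) :
    ‖a * b - b * a‖ ≤ 2 * ‖a‖ * ‖b‖ :=
  calc ‖a * b - b * a‖ ≤ ‖a * b‖ + ‖b * a‖ := norm_sub_le _ _
    _ ≤ ‖a‖ * ‖b‖ + ‖b‖ * ‖a‖ := add_le_add (norm_mul_le _ _) (norm_mul_le _ _)
    _ = 2 * ‖a‖ * ‖b‖ := by ring

theorem norm_mul_mul_inv_sub_self {𝕜 : Type*} [NormedDivisionRing 𝕜] {q : 𝕜} (hq : q ≠ 0)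
    (t : 𝕜) : ‖q * t * q⁻¹ - t‖ = ‖q * t - t * q‖ / ‖q‖ := by
  have h : q * t * q⁻¹ - t = (q * t - t * q) * q⁻¹ := by
    rw [sub_mul, mul_assoc t, mul_inv_cancel₀ hq, mul_one]
  rw [h, norm_mul, norm_inv, div_eq_mul_inv]

namespace Quaternion

theorem coe_sub_smul_mul_sub_mul_coe_sub_smul {R : Type*} [CommRing R] (c s : R) (u t : ℍ[R]) :
    ((c : ℍ[R]) - s • u) * t - t * ((c : ℍ[R]) - s • u) = s • (t * u - u * t) := by
  simp only [sub_mul, mul_sub, smul_mul_assoc, mul_smul_comm, smul_sub, coe_commutes]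
  abel

theorem normSq_coe_sub_smul_of_re_eq_zero {R : Type*} [CommRing R] (c s : R) {u : ℍ[R]}
    (hu : u.re = 0) : normSq ((c : ℍ[R]) - s • u) = c ^ 2 + s ^ 2 * normSq u := by
  simp only [normSq_def', re_sub, re_coe, re_smul, hu, imI_sub, imI_coe, imI_smul, imJ_sub,
    imJ_coe, imJ_smul, imK_sub, imK_coe, imK_smul, smul_eq_mul]
  ring

theorem norm_eq_one_of_normSq_eq_one {a : ℍ} (h : normSq a = 1) : ‖a‖ = 1 := by
  rw [normSq_eq_norm_mul_self] at h
  nlinarith [norm_nonneg a]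

theorem norm_cos_sub_sin_smul {u : ℍ} (hu_re : u.re = 0) (hu_norm : ‖u‖ = 1) (φ : ℝ) :
    ‖(Real.cos φ : ℍ) - Real.sin φ • u‖ = 1 := by
  apply norm_eq_one_of_normSq_eq_one
  rw [normSq_coe_sub_smul_of_re_eq_zero _ _ hu_re, normSq_eq_norm_mul_self, hu_norm, mul_one,
    mul_one, Real.cos_sq_add_sin_sq]

theorem norm_rotation_sub_le {u : ℍ} (hu_re : u.re = 0) (hu_norm : ‖u‖ = 1) (θ : ℝ) (t : ℍ) :
    ‖((Real.cos (θ / 2) : ℍ) - Real.sin (θ / 2) • u) * t *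
      ((Real.cos (θ / 2) : ℍ) - Real.sin (θ / 2) • u)⁻¹ - t‖ ≤ |θ| * ‖t‖ := by
  have hq := norm_cos_sub_sin_smul hu_re hu_norm (θ / 2)
  have hq0 : (Real.cos (θ / 2) : ℍ) - Real.sin (θ / 2) • u ≠ 0 := norm_ne_zero_iff.mp (by simp [hq])
  rw [norm_mul_mul_inv_sub_self hq0, hq, div_one, coe_sub_smul_mul_sub_mul_coe_sub_smul,
    norm_smul, Real.norm_eq_abs]
  calc |Real.sin (θ / 2)| * ‖t * u - u * t‖ ≤ |θ / 2| * (2 * ‖t‖ * ‖u‖) :=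
        mul_le_mul Real.abs_sin_le_abs (norm_mul_sub_mul_le t u) (norm_nonneg _) (abs_nonneg _)
    _ = |θ| * ‖t‖ := by rw [hu_norm, abs_div, abs_two]; ring

theorem norm_smul_of_normSq_eq_one (α : ℝ) {e : ℍ} (he : normSq e = 1) : ‖α • e‖ = |α| := by
  rw [norm_smul, norm_eq_one_of_normSq_eq_one he, Real.norm_eq_abs, mul_one]

theorem norm_smul_i_add_smul_j_add_smul_k_le (α₁ α₂ α₃ : ℝ) :
    ‖(α₁ • ⟨0, 1, 0, 0⟩ + α₂ • ⟨0, 0, 1, 0⟩ + α₃ • ⟨0, 0, 0, 1⟩ : ℍ)‖ ≤ |α₁| + |α₂| + |α₃| := by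
  refine norm_add₃_le.trans_eq ?_
  congr 2 <;> exact norm_smul_of_normSq_eq_one _ ((normSq_def' _).trans (by norm_num))

end Quaternion

theorem rot_error_le_three_a_theta (q u t : ℍ[ℝ]) (θ a α₁ α₂ α₃ : ℝ)
    (hu_re : u.re = 0) (hu_norm : ‖u‖ = 1)
    (hθ : θ ∈ Set.Icc (0 : ℝ) (2 * Real.pi))
    (hq : q = (Real.cos (θ / 2) : ℍ[ℝ]) - Real.sin (θ / 2) • u)
    (ht : t = α₁ • (⟨0, 1, 0, 0⟩ : ℍ[ℝ]) + α₂ • (⟨0, 0, 1, 0⟩ : ℍ[ℝ])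
            + α₃ • (⟨0, 0, 0, 1⟩ : ℍ[ℝ]))
    (h₁ : |α₁| ≤ a) (h₂ : |α₂| ≤ a) (h₃ : |α₃| ≤ a) :
    ‖q * t * q⁻¹ - t‖ ≤ 3 * a * θ := by
  have ht_le : ‖t‖ ≤ 3 * a := by
    rw [ht]
    exact (norm_smul_i_add_smul_j_add_smul_k_le α₁ α₂ α₃).trans (by linarith)
  calc ‖q * t * q⁻¹ - t‖ ≤ |θ| * ‖t‖ := hq ▸ norm_rotation_sub_le hu_re hu_norm θ t
    _ = θ * ‖t‖ := by rw [abs_of_nonneg hθ.1]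
    _ ≤ θ * (3 * a) := mul_le_mul_of_nonneg_left ht_le hθ.1
    _ = 3 * a * θ := mul_comm _ _
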